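/- Let n be a positive integer with n ≡ 2 (mod 3). Then, modulo Phi_n(q)^2, 1 + [2n]^2 (2 - q^{2n}) * sum_{j=1}^{(2n-1)/3} ( q^{3j-1}/[3j-1]^2 - q^{3j}/[3j]^2 ) ≡ 5. -/

import Mathlib

open Finset

/-- The generator `q` of the field `ℚ(q)` of rational functions. -/
noncomputable def q : RatFunc ℚ := RatFunc.X

/-- The `q`-integer `[r] = (1 - q^r)/(1 - q)`. -/
noncomputable def qint (r : ℤ) : RatFunc ℚ := (1 - q ^ r) / (1 - q)

/-- The `q`-shifted factorial `(x; b)_m = (1-x)(1-xb)⋯(1-x b^(m-1))`. -/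
noncomputable def qpoch (x b : RatFunc ℚ) (m : ℕ) : RatFunc ℚ :=
  ∏ i ∈ Finset.range m, (1 - x * b ^ i)

/-- `f ≡ g (mod P)`: `f - g = P * (r/s)` with `s` coprime to `P`. -/
def qcong (f g : RatFunc ℚ) (P : Polynomial ℚ) : Prop :=
  ∃ r s : Polynomial ℚ, IsCoprime s P ∧
    f - g = algebraMap (Polynomial ℚ) (RatFunc ℚ) P *
      (algebraMap (Polynomial ℚ) (RatFunc ℚ) r / algebraMap (Polynomial ℚ) (RatFunc ℚ) s)

/-!
Write `x = q^n`. Since `Φ_n ∣ 1 - q^k` whenever `n ∣ k`, the factor `[2n]^2` is divisible by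
`Φ_n^2`, so every summand `[2n]^2 (2 - q^{2n}) q^m/[m]^2` with `n ∤ m` vanishes modulo `Φ_n^2`:
its denominator `(1 - q^m)^2` is coprime to `Φ_n`. The indices `3j - 1, 3j` run over
`2, …, 2n - 1`, so the only surviving summand is `m = n` (at `j = (n + 1)/3`), which equals
`x (1 + x)^2 (2 - x^2)`. This is `4` modulo `(x - 1)^2`, hence modulo `Φ_n^2`.
-/

open Polynomial

section CoprimeDenom

variable {R : Type*} (K : Type*) [CommRing R] [Field K] [Algebra R K]

/-- Requiring `algebraMap R K s ≠ 0` keeps `r / 0 = 0` from counting as a fraction. -/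
def coprimeDenomSubring (P : R) : Subring K where
  carrier := {f | ∃ r s : R, IsCoprime s P ∧ algebraMap R K s ≠ 0 ∧
    f = algebraMap R K r / algebraMap R K s}
  zero_mem' := ⟨0, 1, isCoprime_one_left, by simp, by simp⟩
  one_mem' := ⟨1, 1, isCoprime_one_left, by simp, by simp⟩
  add_mem' := by
    rintro _ _ ⟨r₁, s₁, hc₁, hs₁, rfl⟩ ⟨r₂, s₂, hc₂, hs₂, rfl⟩
    refine ⟨r₁ * s₂ + r₂ * s₁, s₁ * s₂, hc₁.mul_left hc₂, by simp [hs₁, hs₂], ?_⟩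
    rw [div_add_div _ _ hs₁ hs₂, map_add, map_mul, map_mul, map_mul, mul_comm (algebraMap R K s₁)]
  mul_mem' := by
    rintro _ _ ⟨r₁, s₁, hc₁, hs₁, rfl⟩ ⟨r₂, s₂, hc₂, hs₂, rfl⟩
    refine ⟨r₁ * r₂, s₁ * s₂, hc₁.mul_left hc₂, by simp [hs₁, hs₂], ?_⟩
    rw [div_mul_div_comm, map_mul, map_mul]
  neg_mem' := by
    rintro _ ⟨r, s, hc, hs, rfl⟩
    exact ⟨-r, s, hc, hs, by rw [map_neg, neg_div]⟩

variable {K}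

theorem div_mem_coprimeDenomSubring {P s : R} (r : R) (hc : IsCoprime s P)
    (hs : algebraMap R K s ≠ 0) :
    algebraMap R K r / algebraMap R K s ∈ coprimeDenomSubring K P :=
  ⟨r, s, hc, hs, rfl⟩

theorem algebraMap_mem_coprimeDenomSubring (P r : R) :
    algebraMap R K r ∈ coprimeDenomSubring K P := by
  simpa using div_mem_coprimeDenomSubring (K := K) (P := P) r isCoprime_one_left (by simp)

theorem algebraMap_mem_span_of_dvd {P a : R} (h : P ∣ a) :
    algebraMap R K a ∈ coprimeDenomSubring K P ∙ algebraMap R K P := by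
  obtain ⟨b, rfl⟩ := h
  refine Submodule.mem_span_singleton.2
    ⟨⟨_, algebraMap_mem_coprimeDenomSubring P b⟩, ?_⟩
  rw [Subring.smul_def, smul_eq_mul, map_mul, mul_comm]

theorem mul_mem_span_of_mem {P : R} {x a : K}
    (hx : x ∈ coprimeDenomSubring K P ∙ algebraMap R K P) (ha : a ∈ coprimeDenomSubring K P) :
    x * a ∈ coprimeDenomSubring K P ∙ algebraMap R K P := by
  rw [mul_comm]
  exact Submodule.smul_mem _ ⟨a, ha⟩ hx

end CoprimeDenom

theorem qcong_of_sub_mem_span {f g : RatFunc ℚ} {P : ℚ[X]}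
    (h : f - g ∈ coprimeDenomSubring (RatFunc ℚ) P ∙ algebraMap ℚ[X] (RatFunc ℚ) P) :
    qcong f g P := by
  obtain ⟨a, ha⟩ := Submodule.mem_span_singleton.1 h
  obtain ⟨r, s, hc, -, hrs⟩ := a.2
  exact ⟨r, s, hc, by rw [← ha, Subring.smul_def, smul_eq_mul, mul_comm, ← hrs]⟩

theorem isCoprime_one_sub_X_pow_cyclotomic {n m : ℕ} (hm : 0 < m) (h : ¬ n ∣ m) :
    IsCoprime (1 - X ^ m) (cyclotomic n ℚ) := by
  rw [← neg_sub, ← prod_cyclotomic_eq_X_pow_sub_one hm]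
  refine IsCoprime.neg_left (IsCoprime.prod_left fun d hd => ?_)
  exact cyclotomic.isCoprime_rat fun hdn => h (hdn ▸ Nat.dvd_of_mem_divisors hd)

theorem cyclotomic_dvd_one_sub_X_pow {n k : ℕ} (hk : n ∣ k) : cyclotomic n ℚ ∣ 1 - X ^ k := by
  obtain ⟨c, rfl⟩ := hk
  refine dvd_sub_comm.1 ((cyclotomic.dvd_X_pow_sub_one n ℚ).trans ?_)
  simpa [pow_mul] using sub_dvd_pow_sub_pow (X ^ n : ℚ[X]) 1 c

theorem algebraMap_X_eq_q : algebraMap ℚ[X] (RatFunc ℚ) X = q :=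
  RatFunc.algebraMap_X

theorem algebraMap_one_sub_X_pow_ne_zero {m : ℕ} (hm : 0 < m) :
    algebraMap ℚ[X] (RatFunc ℚ) (1 - X ^ m) ≠ 0 := by
  rw [map_ne_zero_iff _ (RatFunc.algebraMap_injective ℚ), ← neg_sub, neg_ne_zero]
  simpa using X_pow_sub_C_ne_zero hm (1 : ℚ)

theorem one_sub_q_pow_ne_zero {m : ℕ} (hm : 0 < m) : (1 : RatFunc ℚ) - q ^ m ≠ 0 := by
  simpa only [map_sub, map_one, map_pow, algebraMap_X_eq_q] using
    algebraMap_one_sub_X_pow_ne_zero hm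

theorem one_sub_q_ne_zero : (1 : RatFunc ℚ) - q ≠ 0 := by
  simpa using one_sub_q_pow_ne_zero Nat.zero_lt_one

noncomputable abbrev cyclotomicSqMultiples (n : ℕ) :
    Submodule (coprimeDenomSubring (RatFunc ℚ) (cyclotomic n ℚ ^ 2)) (RatFunc ℚ) :=
  coprimeDenomSubring (RatFunc ℚ) (cyclotomic n ℚ ^ 2) ∙
    algebraMap ℚ[X] (RatFunc ℚ) (cyclotomic n ℚ ^ 2)

theorem qint_sq_mul_q_zpow_div_qint_sq_mem {n k m : ℕ} (hk : n ∣ k) (hm : 0 < m)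
    (hnm : ¬ n ∣ m) :
    qint k ^ 2 * (q ^ (m : ℤ) / qint m ^ 2) ∈ cyclotomicSqMultiples n := by
  have hm₀ := algebraMap_one_sub_X_pow_ne_zero hm
  have : qint k ^ 2 * (q ^ (m : ℤ) / qint m ^ 2) =
      algebraMap ℚ[X] (RatFunc ℚ) ((1 - X ^ k) ^ 2) *
        (algebraMap ℚ[X] (RatFunc ℚ) (X ^ m) / algebraMap ℚ[X] (RatFunc ℚ) ((1 - X ^ m) ^ 2)) := by
    have := one_sub_q_ne_zero
    have := one_sub_q_pow_ne_zero hm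
    simp only [qint, zpow_natCast, map_pow, map_sub, map_one, algebraMap_X_eq_q]
    field_simp
  rw [this]
  exact mul_mem_span_of_mem
    (algebraMap_mem_span_of_dvd (pow_dvd_pow_of_dvd (cyclotomic_dvd_one_sub_X_pow hk) 2))
    (div_mem_coprimeDenomSubring _ (isCoprime_one_sub_X_pow_cyclotomic hm hnm).pow
      (by simpa using hm₀))

theorem qint_two_mul_div_qint {n : ℕ} (hn : 0 < n) : qint (2 * n) / qint n = 1 + q ^ n := by
  have := one_sub_q_ne_zero
  have := one_sub_q_pow_ne_zero hn
  rw [qint, qint, show 2 * (n : ℤ) = ((n * 2 : ℕ) : ℤ) by push_cast; ring, zpow_natCast,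
    zpow_natCast, pow_mul]
  field_simp
  ring

theorem qint_two_mul_sq_mul_sub_four_mem {n : ℕ} (hn : 0 < n) :
    qint (2 * n) ^ 2 * (2 - q ^ (2 * n)) * (q ^ (n : ℤ) / qint n ^ 2) - 4 ∈
      cyclotomicSqMultiples n := by
  have : qint n ≠ 0 := div_ne_zero (one_sub_q_pow_ne_zero hn) one_sub_q_ne_zero
  have key : qint (2 * n) ^ 2 * (2 - q ^ (2 * n)) * (q ^ (n : ℤ) / qint n ^ 2) - 4 =
      algebraMap ℚ[X] (RatFunc ℚ) ((X ^ n - 1) ^ 2) *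
        algebraMap ℚ[X] (RatFunc ℚ) (-X ^ (3 * n) - 4 * X ^ (2 * n) - 6 * X ^ n - 4) := by
    calc _ = (qint (2 * n) / qint n) ^ 2 * (2 - (q ^ n) ^ 2) * q ^ n - 4 := by
          rw [zpow_natCast, ← pow_mul']
          field_simp
      _ = (q ^ n - 1) ^ 2 * (-(q ^ n) ^ 3 - 4 * (q ^ n) ^ 2 - 6 * q ^ n - 4) := by
          rw [qint_two_mul_div_qint hn]
          ring
      _ = _ := by
          simp only [map_pow, map_sub, map_mul, map_neg, map_one, map_ofNat,
            algebraMap_X_eq_q, pow_mul']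
  rw [key]
  exact mul_mem_span_of_mem
    (algebraMap_mem_span_of_dvd (pow_dvd_pow_of_dvd (cyclotomic.dvd_X_pow_sub_one n ℚ) 2))
    (algebraMap_mem_coprimeDenomSubring _ _)

theorem stmt19_general (n : ℕ) (hmod : n % 3 = 2) :
    qcong
      (1 + qint (2 * n) ^ 2 * (2 - q ^ (2 * n)) *
        ∑ j ∈ Finset.Icc 1 ((2 * n - 1) / 3),
          (q ^ (3 * (j : ℤ) - 1) / qint (3 * j - 1) ^ 2 -
            q ^ (3 * (j : ℤ)) / qint (3 * j) ^ 2))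
      5
      (Polynomial.cyclotomic n ℚ ^ 2) := by
  set T := qint (2 * n) ^ 2 * (2 - q ^ (2 * n))
  have hT : ∀ m : ℤ, 0 < m → m < 2 * n → m ≠ n →
      T * (q ^ m / qint m ^ 2) ∈ cyclotomicSqMultiples n := by
    intro m hm₀ hm hmn
    lift m to ℕ using hm₀.le
    have hnm : ¬ n ∣ m := fun h => hmn (congrArg _ (Nat.eq_of_dvd_of_lt_two_mul (by omega) h
      (by omega)))
    have hq : q ∈ coprimeDenomSubring (RatFunc ℚ) (cyclotomic n ℚ ^ 2) :=
      algebraMap_X_eq_q ▸ algebraMap_mem_coprimeDenomSubring _ X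
    convert mul_mem_span_of_mem (qint_sq_mul_q_zpow_div_qint_sq_mem (dvd_mul_left n 2)
      (by omega) hnm) (sub_mem (ofNat_mem _ 2) (pow_mem hq (2 * n))) using 1
    push_cast
    ring
  set j₀ := (n + 1) / 3
  have hj₀ : j₀ ∈ Icc 1 ((2 * n - 1) / 3) := by simp only [mem_Icc]; omega
  have hj₀n : 3 * (j₀ : ℤ) = n + 1 := by omega
  have hsplit : 1 + T * ∑ j ∈ Icc 1 ((2 * n - 1) / 3),
        (q ^ (3 * (j : ℤ) - 1) / qint (3 * j - 1) ^ 2 - q ^ (3 * (j : ℤ)) / qint (3 * j) ^ 2) - 5 =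
      (T * (q ^ (n : ℤ) / qint n ^ 2) - 4) +
        (∑ j ∈ (Icc 1 ((2 * n - 1) / 3)).erase j₀,
          (T * (q ^ (3 * (j : ℤ) - 1) / qint (3 * j - 1) ^ 2) -
            T * (q ^ (3 * (j : ℤ)) / qint (3 * j) ^ 2)) -
          T * (q ^ ((n : ℤ) + 1) / qint (n + 1) ^ 2)) := by
    rw [← add_sum_erase _ _ hj₀, hj₀n, add_sub_cancel_right, mul_add, mul_sum]
    simp only [mul_sub]
    ring
  apply qcong_of_sub_mem_span
  rw [hsplit]
  refine add_mem (qint_two_mul_sq_mul_sub_four_mem (by omega))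
    (sub_mem (sum_mem fun j hj => ?_) (hT _ (by omega) (by omega) (by omega)))
  obtain ⟨hjj₀, hj⟩ := mem_erase.1 hj
  rw [mem_Icc] at hj
  exact sub_mem (hT _ (by omega) (by omega) (by omega)) (hT _ (by omega) (by omega) (by omega))

theorem stmt19 (n : ℕ) (hpos : 0 < n) (hmod : n % 3 = 2) :
    qcong
      (1 + qint (2 * n) ^ 2 * (2 - q ^ (2 * n)) *
        ∑ j ∈ Finset.Icc 1 ((2 * n - 1) / 3),
          (q ^ (3 * (j : ℤ) - 1) / qint (3 * j - 1) ^ 2 -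
            q ^ (3 * (j : ℤ)) / qint (3 * j) ^ 2))
      5
      (Polynomial.cyclotomic n ℚ ^ 2) :=
  stmt19_general n hmod
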